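/- Let k ≥ 2, p ≥ k and q ≥ p be integers, and let I be a maximization instance of k CSP-q with n variables and opt(I) ≠ wor(I). Define opt(I | P_p(Σ_q)) := max over all p-element subsets T ⊆ Σ_q of max_{x ∈ T^n} v(I,x), the best objective value over solutions whose coordinates take at most p distinct values. Then (opt(I | P_p(Σ_q)) − wor(I))/(opt(I) − wor(I)) ≥ γ(q,p,k). -/

import Mathlib

/-- An instance of the (maximization) problem `k CSP-q` with `n` variables:
`m` weighted constraints, where constraint `i` has positive weight `w i`,
arity `arity i ≤ k`, a strictly increasing tuple `idx i` of indices of the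
variables it depends on, and a constraint function `P i : Σ_q^{arity i} → ℝ`. -/
structure CSPInstance (q k n : ℕ) where
  m : ℕ
  w : Fin m → ℝ
  w_pos : ∀ i, 0 < w i
  arity : Fin m → ℕ
  arity_le : ∀ i, arity i ≤ k
  idx : (i : Fin m) → Fin (arity i) → Fin n
  idx_mono : ∀ i, StrictMono (idx i)
  P : (i : Fin m) → ((Fin (arity i) → Fin q) → ℝ)

namespace CSPInstance

variable {q k n : ℕ}

/-- The objective value `v(I, x)` of a solution `x ∈ Σ_q^n`. -/
def value (I : CSPInstance q k n) (x : Fin n → Fin q) : ℝ :=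
  ∑ i : Fin I.m, I.w i * I.P i (fun s => x (I.idx i s))

/-- `opt(I)`, the best (maximum) objective value. -/
noncomputable def opt (I : CSPInstance q k n) : ℝ := sSup (Set.range I.value)

/-- `wor(I)`, the worst (minimum) objective value. -/
noncomputable def wor (I : CSPInstance q k n) : ℝ := sInf (Set.range I.value)

/-- `E[v(I,X)]`, the average objective value over all `q^n` solutions. -/
noncomputable def avg (I : CSPInstance q k n) : ℝ :=
  (∑ x : Fin n → Fin q, I.value x) / (q : ℝ) ^ n

/-- A strong coloring of `I` with `ν` colors: an assignment of colors to variables such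
that the support of each constraint meets each color class in at most one index. -/
def StrongColoring (I : CSPInstance q k n) (ν : ℕ) : Prop :=
  ∃ c : Fin n → Fin ν, ∀ i : Fin I.m, Function.Injective (fun s => c (I.idx i s))

end CSPInstance

/-- `(Ψ, Φ)` is a `(q,p)`-alphabet reduction pair of arrays (ARPA) of strength `k`:
both arrays have `R` rows, `q` columns indexed by `Σ_q` and entries in `Σ_q`;
`Φ` contains at least one row equal to `(0, 1, ..., q-1)` (i.e. the identity);
every row of `Ψ` takes at most `p` pairwise distinct values; and for every `k` pairwise
distinct columns and every `v ∈ Σ_q^k`, `Ψ` and `Φ` have the same number of rows whose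
restriction to these columns equals `v`. -/
def IsARPA (q p k R : ℕ) (Ψ Φ : Fin R → Fin q → Fin q) : Prop :=
  (∃ r, ∀ j : Fin q, Φ r j = j) ∧
  (∀ r, (Finset.univ.image (Ψ r)).card ≤ p) ∧
  (∀ c : Fin k → Fin q, StrictMono c → ∀ v : Fin k → Fin q,
    (Finset.univ.filter fun r => ∀ s, Ψ r (c s) = v s).card =
      (Finset.univ.filter fun r => ∀ s, Φ r (c s) = v s).card)

/-- `Γ(R, R*, q, p, k)` is nonempty: there is a `(q,p)`-ARPA of strength `k` with `R` rows
in which the row `(0, 1, ..., q-1)` occurs exactly `R*` times in `Φ`. -/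
def GammaNonempty (R Rstar q p k : ℕ) : Prop :=
  ∃ Ψ Φ : Fin R → Fin q → Fin q, IsARPA q p k R Ψ Φ ∧
    (Finset.univ.filter fun r => ∀ j : Fin q, Φ r j = j).card = Rstar

/-- `γ(q,p,k)`: the supremum of `R*/R` over all integers `R ≥ R* > 0` such that
`Γ(R, R*, q, p, k)` is nonempty. -/
noncomputable def gammaARPA (q p k : ℕ) : ℝ :=
  sSup {x : ℝ | ∃ R Rstar : ℕ, 0 < Rstar ∧ Rstar ≤ R ∧ GammaNonempty R Rstar q p k ∧
    x = (Rstar : ℝ) / R}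

/-!
Evaluate an optimal solution `x` through every row of an ARPA `(Ψ, Φ)` with `R` rows. A
constraint reads at most `k` distinct letters of `x`, i.e. at most `k` columns of the arrays,
and on any `k` columns the rows of `Ψ` and of `Φ` agree as multisets; hence
`∑ r, v(I, Ψ r ∘ x) = ∑ r, v(I, Φ r ∘ x)`. Each `Ψ r ∘ x` uses at most `p` letters, so the left
side is at most `R · opt(I | P_p(Σ_q))`, while the `R*` identity rows of `Φ` contribute `opt(I)`
each and the remaining rows at least `wor(I)`.
-/

open Finset

section Marginals

variable {ι α β : Type*} [Fintype ι]

def EqualMarginals (k : ℕ) [LinearOrder β] [DecidableEq α] (Ψ Φ : ι → β → α) : Prop :=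
  ∀ c : Fin k → β, StrictMono c → ∀ v : Fin k → α,
    #{r | ∀ s, Ψ r (c s) = v s} = #{r | ∀ s, Φ r (c s) = v s}

theorem sum_apply_eq_sum_card_smul {γ M : Type*} [Fintype γ] [DecidableEq γ] [AddCommMonoid M]
    (f : ι → γ) (F : γ → M) : ∑ r, F (f r) = ∑ v, #{r | f r = v} • F v := by
  simp only [← sum_fiberwise' univ f F, sum_const]

theorem EqualMarginals.sum_comp_eq [LinearOrder β] [Fintype α] [DecidableEq α] {k : ℕ}
    {Ψ Φ : ι → β → α} (h : EqualMarginals k Ψ Φ) {c : Fin k → β} (hc : StrictMono c)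
    {M : Type*} [AddCommMonoid M] (F : (Fin k → α) → M) :
    ∑ r, F (Ψ r ∘ c) = ∑ r, F (Φ r ∘ c) := by
  simp only [sum_apply_eq_sum_card_smul (fun r => Ψ r ∘ c),
    sum_apply_eq_sum_card_smul (fun r => Φ r ∘ c), funext_iff, Function.comp_apply, h c hc]

theorem exists_strictMono_comp_eq [LinearOrder β] [Fintype β] {k t : ℕ}
    (hk : k ≤ Fintype.card β) (d : Fin t → β) (hd : #(univ.image d) ≤ k) :
    ∃ c : Fin k → β, StrictMono c ∧ ∃ σ : Fin t → Fin k, c ∘ σ = d := by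
  obtain ⟨T, hdT, hT⟩ := exists_superset_card_eq hd hk
  have hrange : ∀ s, d s ∈ Set.range (T.orderEmbOfFin hT) := fun s => by
    simpa using hdT (mem_image_of_mem d (mem_univ s))
  choose σ hσ using hrange
  exact ⟨T.orderEmbOfFin hT, (T.orderEmbOfFin hT).strictMono, σ, funext hσ⟩

theorem EqualMarginals.sum_comp_eq_of_card_image_le [LinearOrder β] [Fintype β] [Fintype α]
    [DecidableEq α] {k t : ℕ} {Ψ Φ : ι → β → α} (h : EqualMarginals k Ψ Φ)
    (hk : k ≤ Fintype.card β) (d : Fin t → β) (hd : #(univ.image d) ≤ k)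
    {M : Type*} [AddCommMonoid M] (F : (Fin t → α) → M) :
    ∑ r, F (Ψ r ∘ d) = ∑ r, F (Φ r ∘ d) := by
  obtain ⟨c, hc, σ, rfl⟩ := exists_strictMono_comp_eq hk d hd
  exact h.sum_comp_eq hc (fun u => F (u ∘ σ))

end Marginals

namespace CSPInstance

variable {q k n : ℕ} (I : CSPInstance q k n)

theorem wor_le_value (x : Fin n → Fin q) : I.wor ≤ I.value x :=
  csInf_le (Set.finite_range _).bddBelow ⟨x, rfl⟩

theorem value_le_opt (x : Fin n → Fin q) : I.value x ≤ I.opt :=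
  le_csSup (Set.finite_range _).bddAbove ⟨x, rfl⟩

theorem exists_value_eq_opt [NeZero q] : ∃ x, I.value x = I.opt :=
  (Set.range_nonempty _).csSup_mem (Set.finite_range _)

theorem wor_le_opt [NeZero q] : I.wor ≤ I.opt :=
  (I.wor_le_value default).trans (I.value_le_opt default)

/-- `opt(I | P_p(Σ_q))`. -/
noncomputable def optRestricted (p : ℕ) : ℝ :=
  sSup {x : ℝ | ∃ T : Finset (Fin q), T.card = p ∧
    ∃ y : Fin n → Fin q, (∀ j, y j ∈ T) ∧ x = I.value y}

theorem value_le_optRestricted {p : ℕ} (hpq : p ≤ q) {y : Fin n → Fin q}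
    (hy : #(univ.image y) ≤ p) : I.value y ≤ I.optRestricted p := by
  obtain ⟨T, hyT, hT⟩ := exists_superset_card_eq hy (by simpa using hpq)
  refine le_csSup ((Set.finite_range I.value).subset ?_).bddAbove
    ⟨T, hT, y, fun j => hyT (mem_image_of_mem y (mem_univ j)), rfl⟩
  rintro _ ⟨-, -, z, -, rfl⟩
  exact ⟨z, rfl⟩

theorem wor_le_optRestricted {p : ℕ} (hp : 0 < p) (hpq : p ≤ q) :
    I.wor ≤ I.optRestricted p := by
  have : NeZero q := ⟨by omega⟩
  have hconst : #(univ.image fun _ : Fin n => (default : Fin q)) ≤ p :=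
    (card_le_one.2 (by simp)).trans hp
  exact (I.wor_le_value _).trans (I.value_le_optRestricted hpq hconst)

variable {ι : Type*} [Fintype ι]

theorem sum_value_comp_eq (hkq : k ≤ q) {Ψ Φ : ι → Fin q → Fin q} (h : EqualMarginals k Ψ Φ)
    (x : Fin n → Fin q) : ∑ r, I.value (Ψ r ∘ x) = ∑ r, I.value (Φ r ∘ x) := by
  simp only [value, sum_comm (γ := ι), ← mul_sum]
  refine sum_congr rfl fun i _ => congrArg _ ?_
  exact h.sum_comp_eq_of_card_image_le (by simpa using hkq) (x ∘ I.idx i)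
    (card_image_le.trans (by simpa using I.arity_le i)) (I.P i)

theorem sum_value_comp_le {p : ℕ} (hpq : p ≤ q) {Ψ : ι → Fin q → Fin q}
    (hΨ : ∀ r, #(univ.image (Ψ r)) ≤ p) (x : Fin n → Fin q) :
    ∑ r, I.value (Ψ r ∘ x) ≤ Fintype.card ι * I.optRestricted p := by
  have hrow : ∀ r, #(univ.image (Ψ r ∘ x)) ≤ p := fun r =>
    (card_le_card (image_subset_iff.2 fun j _ => mem_image_of_mem (Ψ r) (mem_univ (x j)))).trans (hΨ r)
  calc ∑ r, I.value (Ψ r ∘ x) ≤ ∑ _r : ι, I.optRestricted p :=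
        sum_le_sum fun r _ => I.value_le_optRestricted hpq (hrow r)
    _ = Fintype.card ι * I.optRestricted p := by simp

theorem card_mul_value_add_le_sum_value_comp (Φ : ι → Fin q → Fin q) (x : Fin n → Fin q) :
    #{r | ∀ j, Φ r j = j} * I.value x + (Fintype.card ι - #{r | ∀ j, Φ r j = j}) * I.wor ≤
      ∑ r, I.value (Φ r ∘ x) := by
  have hcard : (Fintype.card ι : ℝ) = #{r | ∀ j, Φ r j = j} + #{r | ¬∀ j, Φ r j = j} := by
    exact_mod_cast (card_filter_add_card_filter_not (s := univ) _).symm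
  have hid : ∑ r with ∀ j, Φ r j = j, I.value (Φ r ∘ x) = #{r | ∀ j, Φ r j = j} * I.value x := by
    refine (sum_congr rfl fun r hr => ?_).trans (by rw [sum_const, nsmul_eq_mul])
    exact congrArg I.value (funext fun j => (mem_filter.1 hr).2 (x j))
  have hrest : #{r | ¬∀ j, Φ r j = j} * I.wor ≤ ∑ r with ¬∀ j, Φ r j = j, I.value (Φ r ∘ x) := by
    rw [← nsmul_eq_mul, ← sum_const]
    exact sum_le_sum fun r _ => I.wor_le_value _
  rw [← sum_filter_add_sum_filter_not univ (fun r => ∀ j, Φ r j = j), hid, hcard]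
  linarith

end CSPInstance

theorem GammaNonempty.div_le_optRestricted_sub_wor_div {R Rstar q p k n : ℕ} [NeZero q]
    (h : GammaNonempty R Rstar q p k)
    (hR : 0 < R) (hkp : k ≤ p) (hpq : p ≤ q) (I : CSPInstance q k n) (hI : I.wor < I.opt) :
    (Rstar : ℝ) / R ≤ (I.optRestricted p - I.wor) / (I.opt - I.wor) := by
  obtain ⟨Ψ, Φ, ⟨-, hΨ, hΨΦ⟩, rfl⟩ := h
  obtain ⟨x, hx⟩ := I.exists_value_eq_opt
  have hle := I.sum_value_comp_le hpq hΨ x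
  rw [I.sum_value_comp_eq (hkp.trans hpq) hΨΦ x] at hle
  have hge := I.card_mul_value_add_le_sum_value_comp Φ x
  rw [Fintype.card_fin] at hle hge
  rw [hx] at hge
  rw [div_le_div_iff₀ (by exact_mod_cast hR) (sub_pos.2 hI)]
  linarith

/-- Let `k ≥ 2`, `p ≥ k`, `q ≥ p`, and let `I` be a maximization
instance of `k CSP-q` with `n` variables and `opt(I) ≠ wor(I)`. Writing
`opt(I | P_p(Σ_q))` for the best objective value over solutions whose coordinates all lie
in some `p`-element subset `T ⊆ Σ_q`, we have
`(opt(I | P_p(Σ_q)) − wor(I)) / (opt(I) − wor(I)) ≥ γ(q,p,k)`. -/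
theorem restricted_opt_diff_ratio
    (q p k n : ℕ) (hk : 2 ≤ k) (hpk : k ≤ p) (hqp : p ≤ q)
    (I : CSPInstance q k n) (hne : I.opt ≠ I.wor) :
    gammaARPA q p k ≤
      (sSup {x : ℝ | ∃ T : Finset (Fin q), T.card = p ∧
          ∃ y : Fin n → Fin q, (∀ j, y j ∈ T) ∧ x = I.value y} - I.wor) /
        (I.opt - I.wor) := by
  have : NeZero q := ⟨by omega⟩
  have hI : I.wor < I.opt := I.wor_le_opt.lt_of_ne hne.symm
  refine Real.sSup_le ?_ (div_nonneg (sub_nonneg.2 (I.wor_le_optRestricted (by omega) hqp))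
    (sub_nonneg.2 hI.le))
  rintro _ ⟨R, Rstar, hRstar, hRR, hΓ, rfl⟩
  exact hΓ.div_le_optRestricted_sub_wor_div (by omega) hpk hqp I hI
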